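/- If at a block boundary the adjacent strings M[i] and M[i+1] have lcp value 0, then they start with different characters, and for any later boundary j > i with lcp value 0, the first character of M[j+1] is strictly greater than or equal to the first character of M[i+1]; strictly greater if they are distinct boundaries contributing to the σ bound. -/

import Mathlib

/-- Length of the longest common prefix of two strings. -/
def lcp {α : Type*} [DecidableEq α] : List α → List α → ℕ
  | a :: s, b :: t => if a = b then lcp s t + 1 else 0
  | _, _ => 0

/-- The stable merge of two lists, tagging each element with the list (1 or 2) it
came from; ties are broken in favor of the first list. -/
def mergeTagged {α : Type*} [LinearOrder α] : List α → List α → List (α × ℕ)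
  | [], B => B.map (·, 2)
  | a :: A, [] => (a, 1) :: mergeTagged A []
  | a :: A, b :: B =>
    if a ≤ b then (a, 1) :: mergeTagged A (b :: B)
    else (b, 2) :: mergeTagged (a :: A) B
  termination_by A B => A.length + B.length

lemma mem_mergeTagged {α : Type*} [LinearOrder α] :
    ∀ (A B : List α) (p : α × ℕ), p ∈ mergeTagged A B → p.1 ∈ A ++ B
  | [], B, p, hp => by
      simp [mergeTagged] at hp
      obtain ⟨x, hx, rfl⟩ := hp
      simpa using hx
  | a :: A, [], p, hp => by
      rw [mergeTagged] at hp
      rcases List.mem_cons.1 hp with hp | hp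
      · simp [hp]
      · have := mem_mergeTagged A [] p hp
        simp at this ⊢
        tauto
  | a :: A, b :: B, p, hp => by
      rw [mergeTagged] at hp
      split_ifs at hp <;> rcases List.mem_cons.1 hp with hp | hp
      · simp [hp]
      · have := mem_mergeTagged A (b :: B) p hp
        simp at this ⊢; tauto
      · simp [hp]
      · have := mem_mergeTagged (a :: A) B p hp
        simp at this ⊢; tauto
  termination_by A B => A.length + B.length

lemma sorted_mergeTagged {α : Type*} [LinearOrder α] :
    ∀ (A B : List α), A.Pairwise (· ≤ ·) → B.Pairwise (· ≤ ·) →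
      ((mergeTagged A B).map Prod.fst).Pairwise (· ≤ ·)
  | [], B, _, hB => by
      simpa [mergeTagged, List.map_map, Function.comp_def] using hB
  | a :: A, [], hA, hB => by
      rw [mergeTagged, List.map_cons, List.pairwise_cons]
      refine ⟨?_, sorted_mergeTagged A [] (List.pairwise_cons.1 hA).2 hB⟩
      intro x hx
      obtain ⟨p, hp, rfl⟩ := List.mem_map.1 hx
      have := mem_mergeTagged A [] p hp
      simp at this
      exact (List.pairwise_cons.1 hA).1 _ this
  | a :: A, b :: B, hA, hB => by
      rw [mergeTagged]
      split_ifs with hab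
      · rw [List.map_cons, List.pairwise_cons]
        refine ⟨?_, sorted_mergeTagged A (b :: B) (List.pairwise_cons.1 hA).2 hB⟩
        intro x hx
        obtain ⟨p, hp, rfl⟩ := List.mem_map.1 hx
        have := mem_mergeTagged A (b :: B) p hp
        simp at this
        rcases this with h | rfl | h
        · exact (List.pairwise_cons.1 hA).1 _ h
        · exact hab
        · exact hab.trans ((List.pairwise_cons.1 hB).1 _ h)
      · rw [List.map_cons, List.pairwise_cons]
        refine ⟨?_, sorted_mergeTagged (a :: A) B hA (List.pairwise_cons.1 hB).2⟩
        intro x hx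
        obtain ⟨p, hp, rfl⟩ := List.mem_map.1 hx
        have := mem_mergeTagged (a :: A) B p hp
        have hba : b ≤ a := le_of_not_ge hab
        simp at this
        rcases this with rfl | h | h
        · exact hba
        · exact hba.trans ((List.pairwise_cons.1 hA).1 _ h)
        · exact (List.pairwise_cons.1 hB).1 _ h
  termination_by A B => A.length + B.length

lemma headI_le_of_le {α : Type*} [LinearOrder α] [Inhabited α] {s t : List α}
    (hs : s ≠ []) (ht : t ≠ []) (h : s ≤ t) : s.headI ≤ t.headI := by
  rcases lt_or_eq_of_le h with h | rfl
  · rcases s with _ | ⟨a, s⟩; · exact absurd rfl hs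
    rcases t with _ | ⟨b, t⟩; · exact absurd rfl ht
    exact List.head_le_of_lt h
  · exact le_rfl

lemma headI_lt_of_lcp_zero {α : Type*} [LinearOrder α] [Inhabited α] {s t : List α}
    (hs : s ≠ []) (ht : t ≠ []) (h : s ≤ t) (hl : lcp s t = 0) : s.headI < t.headI := by
  rcases s with _ | ⟨a, s⟩; · exact absurd rfl hs
  rcases t with _ | ⟨b, t⟩; · exact absurd rfl ht
  have hne : a ≠ b := by
    intro hab
    simp [lcp, hab] at hl
  exact lt_of_le_of_ne (headI_le_of_le hs ht h) hne

/-- If at a block boundary `i` of the stable merge `M` the adjacent strings `M[i]`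
and `M[i+1]` have LCP value `0`, then they start with different characters; and for
any later block boundary `j > i` with LCP value `0`, the first character of
`M[j+1]` is greater than or equal to that of `M[i+1]` — strictly greater, since the
boundaries are distinct (this is what gives the `σ` bound). -/
theorem zero_lcp_boundary_first_chars {α : Type*} [LinearOrder α] [Inhabited α]
    (A B : List (List α))
    (hA : A.Pairwise (· ≤ ·)) (hB : B.Pairwise (· ≤ ·))
    (hne : ∀ s ∈ A ++ B, s ≠ []) (i j : ℕ) (hij : i < j) :
    let T := mergeTagged A B
    let val : ℕ → List α := fun k => (T.getD k ([], 0)).1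
    let lab : ℕ → ℕ := fun k => (T.getD k ([], 0)).2
    i + 1 < T.length → j + 1 < T.length →
    lab i ≠ lab (i + 1) → lab j ≠ lab (j + 1) →
    lcp (val i) (val (i + 1)) = 0 → lcp (val j) (val (j + 1)) = 0 →
    (val i).headI ≠ (val (i + 1)).headI ∧
    (val (i + 1)).headI ≤ (val (j + 1)).headI ∧
    (val (i + 1)).headI < (val (j + 1)).headI := by
  intro T val lab hi hj _ _ hli hlj
  have hS : (T.map Prod.fst).Pairwise (· ≤ ·) := sorted_mergeTagged A B hA hB
  have hval : ∀ k (hk : k < T.length), val k = T[k].1 := by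
    intro k hk
    simp [val, List.getD_eq_getElem?_getD, List.getElem?_eq_getElem hk]
  have hmem : ∀ k (hk : k < T.length), val k ≠ [] := by
    intro k hk
    rw [hval k hk]
    exact hne _ (mem_mergeTagged A B _ (List.getElem_mem hk))
  have hmono : ∀ k l (hkl : k ≤ l) (hl : l < T.length), val k ≤ val l := by
    intro k l hkl hl
    have hk : k < T.length := lt_of_le_of_lt hkl hl
    rw [hval k hk, hval l hl]
    rcases lt_or_eq_of_le hkl with h | rfl
    · have := List.Pairwise.rel_get_of_lt hS (a := ⟨k, by simpa using hk⟩)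
        (b := ⟨l, by simpa using hl⟩) (by simpa [Fin.lt_def] using h)
      simpa using this
    · exact le_rfl
  have hii : i < T.length := Nat.lt_of_succ_lt hi
  have hjj : j < T.length := Nat.lt_of_succ_lt hj
  have h1 : (val i).headI < (val (i + 1)).headI :=
    headI_lt_of_lcp_zero (hmem i hii) (hmem (i+1) hi)
      (hmono i (i+1) (Nat.le_succ i) hi) hli
  have h2 : (val (i + 1)).headI ≤ (val j).headI :=
    headI_le_of_le (hmem (i+1) hi) (hmem j hjj) (hmono (i+1) j hij hjj)
  have h3 : (val j).headI < (val (j + 1)).headI :=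
    headI_lt_of_lcp_zero (hmem j hjj) (hmem (j+1) hj)
      (hmono j (j+1) (Nat.le_succ j) hj) hlj
  exact ⟨ne_of_lt h1, le_of_lt (lt_of_le_of_lt h2 h3), lt_of_le_of_lt h2 h3⟩
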